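/- arXiv:1101.1666 — 10 statements merged into one kernel-verified Lean document; each statement's English description precedes it below -/
import Mathlib

section
/- A sequence of words f^{(1)}, f^{(2)}, ..., f^{(n-1)} over the alphabet {0,1}, where f^{(j)} has length j, is the sequence of columns of the shape of a gapless monotone triangle of size n if and only if for every 1 ≤ j ≤ n-2 the pair g = f^{(j)}, h = f^{(j+1)} satisfies: |h| = |g| + 1 and for every i ≤ |g|, the partial sums satisfy Σ_{k=1}^{i} g_k ≥ Σ_{k=1}^{i} h_k. -/
/-- A monotone triangle (Gog triangle) of size `n`. -/
def MonotoneTriangle (n : ℕ) (a : ℕ → ℕ → ℕ) : Prop :=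
  (∀ i j, 1 ≤ j → j + 1 ≤ i → i ≤ n → a i j < a i (j + 1)) ∧
  (∀ i j, 1 ≤ j → j ≤ i → i + 1 ≤ n → a (i + 1) j ≤ a i j) ∧
  (∀ i j, 1 ≤ j → j ≤ i → i + 1 ≤ n → a i j ≤ a (i + 1) (j + 1)) ∧
  (∀ j, 1 ≤ j → j ≤ n → a n j = j)

/-- A monotone triangle is gapless if `a i j - a (i+1) j ≤ 1` whenever both are defined. -/
def GaplessMT (n : ℕ) (a : ℕ → ℕ → ℕ) : Prop :=
  ∀ i j, 1 ≤ j → j ≤ i → i + 1 ≤ n → a i j ≤ a (i + 1) j + 1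

/-!
Telescoping a column of a monotone triangle upwards from the bottom row `a n q = q` shows that
the triangle is determined by its shape: `a p q = q + (f (n - q))₁ + ⋯ + (f (n - q))_{n - p}`.
Conversely, for 0/1 words this formula always yields weakly decreasing columns without gaps, and
the diagonal condition follows from gaplessness and strictly increasing rows. So everything
reduces to strict increase along rows, and `a p q < a p (q + 1)` is exactly the partial sum
inequality of length `n - p` between the words `f (n - q)` and `f (n - q - 1)`.
-/

open Finset

namespace ColumnWords

variable {n : ℕ} {f : ℕ → ℕ → ℕ}

def triangleOfColumns (n : ℕ) (f : ℕ → ℕ → ℕ) (p q : ℕ) : ℕ :=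
  q + ∑ k ∈ Icc 1 (n - p), f (n - q) k

theorem triangleOfColumns_self (q : ℕ) : triangleOfColumns n f n q = q := by
  simp [triangleOfColumns]

theorem triangleOfColumns_eq_succ_add {p : ℕ} (hp : p < n) (q : ℕ) :
    triangleOfColumns n f p q = triangleOfColumns n f (p + 1) q + f (n - q) (n - p) := by
  unfold triangleOfColumns
  rw [show n - p = n - (p + 1) + 1 by omega, sum_Icc_succ_top (by omega)]
  ring

theorem triangleOfColumns_lt_succ_iff (p q : ℕ) :
    triangleOfColumns n f p q < triangleOfColumns n f p (q + 1) ↔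
      ∑ k ∈ Icc 1 (n - p), f (n - q) k ≤ ∑ k ∈ Icc 1 (n - p), f (n - (q + 1)) k := by
  unfold triangleOfColumns
  omega

theorem gaplessMT_triangleOfColumns
    (h01 : ∀ j k, 1 ≤ k → k ≤ j → j ≤ n - 1 → f j k = 0 ∨ f j k = 1) :
    GaplessMT n (triangleOfColumns n f) := by
  intro p q hq hqp hpn
  have hbit := h01 (n - q) (n - p) (by omega) (by omega) (by omega)
  rw [triangleOfColumns_eq_succ_add (by omega)]
  omega

theorem monotoneTriangle_triangleOfColumns
    (h01 : ∀ j k, 1 ≤ k → k ≤ j → j ≤ n - 1 → f j k = 0 ∨ f j k = 1)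
    (hsum : ∀ j, 1 ≤ j → j ≤ n - 2 → ∀ i, i ≤ j →
      ∑ k ∈ Icc 1 i, f (j + 1) k ≤ ∑ k ∈ Icc 1 i, f j k) :
    MonotoneTriangle n (triangleOfColumns n f) := by
  have hrow : ∀ p q, 1 ≤ q → q + 1 ≤ p → p ≤ n →
      triangleOfColumns n f p q < triangleOfColumns n f p (q + 1) := by
    intro p q hq hqp hpn
    rw [triangleOfColumns_lt_succ_iff]
    rcases Nat.eq_zero_or_pos (n - (q + 1)) with hlast | hpos
    · rw [show n - p = 0 by omega]
      simp
    · have h := hsum (n - (q + 1)) hpos (by omega) (n - p) (by omega)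
      rwa [show n - (q + 1) + 1 = n - q by omega] at h
  refine ⟨hrow, ?_, ?_, fun q _ _ => triangleOfColumns_self q⟩
  · intro p q _ _ hpn
    rw [triangleOfColumns_eq_succ_add (p := p) (by omega)]
    omega
  · intro p q hq hqp hpn
    have hgap := gaplessMT_triangleOfColumns h01 p q hq hqp hpn
    have hlt := hrow (p + 1) q hq (by omega) hpn
    omega

theorem triangleOfColumns_sub_succ {j k : ℕ} (hk : 1 ≤ k) (hkj : k ≤ j) (hjn : j ≤ n) :
    triangleOfColumns n f (n - k) (n - j) - triangleOfColumns n f (n - k + 1) (n - j) =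
      f j k := by
  rw [triangleOfColumns_eq_succ_add (by omega), show n - (n - j) = j by omega,
    show n - (n - k) = k by omega]
  omega

theorem MonotoneTriangle.eq_triangleOfColumns {a : ℕ → ℕ → ℕ} (ha : MonotoneTriangle n a)
    (hf : ∀ j k, 1 ≤ k → k ≤ j → j ≤ n - 1 →
      f j k = a (n - k) (n - j) - a (n - k + 1) (n - j))
    {p q : ℕ} (hq : 1 ≤ q) (hqp : q ≤ p) (hpn : p ≤ n) :
    a p q = triangleOfColumns n f p q := by
  obtain ⟨i, rfl⟩ : ∃ i, p = n - i := ⟨n - p, by omega⟩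
  induction i generalizing q with
  | zero => rw [Nat.sub_zero, ha.2.2.2 q hq (by omega), triangleOfColumns_self]
  | succ i ih =>
    have hstep := hf (n - q) (i + 1) (by omega) (by omega) (by omega)
    have hcol := ha.2.1 (n - (i + 1)) q hq (by omega) (by omega)
    rw [show n - (n - q) = q by omega, show n - (i + 1) + 1 = n - i by omega] at hstep
    rw [show n - (i + 1) + 1 = n - i by omega] at hcol
    rw [triangleOfColumns_eq_succ_add (by omega), show n - (i + 1) + 1 = n - i by omega,
      ← ih hq (by omega) (by omega), show n - (n - (i + 1)) = i + 1 by omega]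
    omega

end ColumnWords

open ColumnWords in
theorem columns_of_gapless_shape_iff_general (n : ℕ) (f : ℕ → ℕ → ℕ)
    (h01 : ∀ j k, 1 ≤ k → k ≤ j → j ≤ n - 1 → f j k = 0 ∨ f j k = 1) :
    (∃ a : ℕ → ℕ → ℕ, MonotoneTriangle n a ∧ GaplessMT n a ∧
        ∀ j k, 1 ≤ k → k ≤ j → j ≤ n - 1 →
          f j k = a (n - k) (n - j) - a (n - k + 1) (n - j)) ↔
    (∀ j, 1 ≤ j → j ≤ n - 2 → ∀ i, i ≤ j →
        ∑ k ∈ Finset.Icc 1 i, f (j + 1) k ≤ ∑ k ∈ Finset.Icc 1 i, f j k) := by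
  constructor
  · rintro ⟨a, ha, -, hf⟩ j hj hjn i hij
    have hlt := ha.1 (n - i) (n - (j + 1)) (by omega) (by omega) (by omega)
    rwa [ha.eq_triangleOfColumns hf (by omega) (by omega) (by omega),
      ha.eq_triangleOfColumns hf (by omega) (by omega) (by omega),
      triangleOfColumns_lt_succ_iff, show n - (n - i) = i by omega,
      show n - (n - (j + 1)) = j + 1 by omega, show n - (n - (j + 1) + 1) = j by omega] at hlt
  · intro hsum
    refine ⟨triangleOfColumns n f, monotoneTriangle_triangleOfColumns h01 hsum,
      gaplessMT_triangleOfColumns h01,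
      fun j k hk hkj hjn => (triangleOfColumns_sub_succ hk hkj (by omega)).symm⟩

/-- A sequence of 0/1-words `f 1, …, f (n-1)`, with `f j` of length `j`
(entries `f j k`, `1 ≤ k ≤ j`), is the sequence of column words of the shape of a
gapless monotone triangle of size `n` (where the shape is `s i j = a i j - a (i+1) j`
and `f j k = s (n-k) (n-j)`) iff for every `1 ≤ j ≤ n-2` and `i ≤ j`, the partial
sums satisfy `∑_{k=1}^i f (j+1) k ≤ ∑_{k=1}^i f j k`. -/
theorem columns_of_gapless_shape_iff (n : ℕ) (hn : 1 ≤ n) (f : ℕ → ℕ → ℕ)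
    (h01 : ∀ j k, 1 ≤ k → k ≤ j → j ≤ n - 1 → f j k = 0 ∨ f j k = 1) :
    (∃ a : ℕ → ℕ → ℕ, MonotoneTriangle n a ∧ GaplessMT n a ∧
        ∀ j k, 1 ≤ k → k ≤ j → j ≤ n - 1 →
          f j k = a (n - k) (n - j) - a (n - k + 1) (n - j)) ↔
    (∀ j, 1 ≤ j → j ≤ n - 2 → ∀ i, i ≤ j →
        ∑ k ∈ Finset.Icc 1 i, f (j + 1) k ≤ ∑ k ∈ Finset.Icc 1 i, f j k) :=
  columns_of_gapless_shape_iff_general n f h01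
end

section
/- Let g and h be words over {0,1} of lengths n-1 and n respectively. Then g and h correspond to two consecutive columns in the shape of a gapless monotone triangle (i.e., for every i ≤ n-1, Σ_{k=1}^{i} g_k ≥ Σ_{k=1}^{i} h_k) if and only if the word w = φ(g,h) of length 2n-1 over the alphabet {a,b} is a prefix of a Dyck word. -/
/-- `theta` maps a pair of letters from `{0,1}` to a word of length 2 over `{a,b}`,
with `true` playing the role of the letter `a` and `false` of the letter `b`:
`theta 0 0 = ab`, `theta 1 1 = ba`, `theta 1 0 = aa`, `theta 0 1 = bb`. -/
def theta (gk hk : ℕ) : List Bool := [decide (hk = 0), decide (gk = 1)]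

/-- For words `g, h` over `{0,1}` with `|h| = |g| + 1 = n` (entries `g 1, …, g (n-1)`
and `h 1, …, h n`), `phi n g h = a θ(g 1, h 1) ⋯ θ(g (n-1), h (n-1))`,
a word of length `2n - 1` over `{a, b}` (with `true = a`, `false = b`). -/
def phi (n : ℕ) (g h : ℕ → ℕ) : List Bool :=
  true :: (List.range (n - 1)).flatMap (fun k => theta (g (k + 1)) (h (k + 1)))

/-- A word over `{a,b}` (with `true = a`, `false = b`) is a prefix of a Dyck word iff
every prefix contains at least as many `a`'s as `b`'s. -/
def IsDyckPrefix (w : List Bool) : Prop :=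
  ∀ m : ℕ, (w.take m).count false ≤ (w.take m).count true

/-!
Every block `θ(g_k, h_k)` of `φ(g,h)` raises the height (number of `a`s minus number of `b`s)
by `2 (g_k - h_k)`, so after the initial `a` and the first `i` blocks the height is
`1 + 2 (∑_{k ≤ i} g_k - ∑_{k ≤ i} h_k)`. A word is a Dyck prefix as soon as all its prefixes of
odd length have nonnegative height, and these are exactly the prefixes ending at block boundaries.
-/

theorem List.take_mul_flatMap_range {α : Type*} {f : ℕ → List α} {k : ℕ}
    (hf : ∀ j, (f j).length = k) {i N : ℕ} (hiN : i ≤ N) :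
    ((List.range N).flatMap f).take (k * i) = (List.range i).flatMap f := by
  obtain ⟨d, rfl⟩ := Nat.exists_eq_add_of_le hiN
  rw [List.range_add, List.flatMap_append]
  exact List.take_left' (by simp [List.length_flatMap, hf, mul_comm])

theorem isDyckPrefix_iff_forall_take_odd (w : List Bool) :
    IsDyckPrefix w ↔
      ∀ i, (w.take (2 * i + 1)).count false ≤ (w.take (2 * i + 1)).count true := by
  refine ⟨fun hw i => hw _, fun hodd m => ?_⟩
  obtain ⟨i, rfl | rfl⟩ := Nat.even_or_odd' m
  · rcases i with _ | i
    · simp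
    have hprev := hodd i
    rw [show 2 * (i + 1) = 2 * i + 1 + 1 by ring, List.take_add_one, List.count_append,
      List.count_append]
    cases hnext : w[2 * i + 1]? with
    | none => simpa using hprev
    | some b =>
      -- the prefix before the new letter has odd length, hence odd height, hence height ≥ 1
      have hlen : (w.take (2 * i + 1)).length = 2 * i + 1 := by
        have := (List.getElem?_eq_some_iff.mp hnext).1
        simp only [List.length_take]
        omega
      have := List.count_false_add_count_true (w.take (2 * i + 1))
      cases b <;> simp <;> omega
  · exact hodd i

theorem length_theta (gk hk : ℕ) : (theta gk hk).length = 2 := rfl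

theorem count_false_theta_add_two_mul (gk hk : ℕ) (hgk : gk = 0 ∨ gk = 1)
    (hhk : hk = 0 ∨ hk = 1) :
    (theta gk hk).count false + 2 * gk = (theta gk hk).count true + 2 * hk := by
  rcases hgk with rfl | rfl <;> rcases hhk with rfl | rfl <;> rfl

def thetaBlocks (g h : ℕ → ℕ) (i : ℕ) : List Bool :=
  (List.range i).flatMap fun k => theta (g (k + 1)) (h (k + 1))

theorem phi_eq_cons_thetaBlocks (n : ℕ) (g h : ℕ → ℕ) :
    phi n g h = true :: thetaBlocks g h (n - 1) := rfl

theorem take_two_mul_thetaBlocks (g h : ℕ → ℕ) (i N : ℕ) :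
    (thetaBlocks g h N).take (2 * i) = thetaBlocks g h (min i N) := by
  rcases le_total i N with hiN | hNi
  · rw [min_eq_left hiN]
    exact List.take_mul_flatMap_range (fun _ => length_theta _ _) hiN
  · rw [min_eq_right hNi]
    exact List.take_of_length_le (by simp [thetaBlocks, length_theta]; omega)

theorem count_false_thetaBlocks_add_two_mul_sum (g h : ℕ → ℕ) (i : ℕ)
    (hg : ∀ k, 1 ≤ k → k ≤ i → g k = 0 ∨ g k = 1)
    (hh : ∀ k, 1 ≤ k → k ≤ i → h k = 0 ∨ h k = 1) :
    (thetaBlocks g h i).count false + 2 * ∑ k ∈ Finset.Icc 1 i, g k =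
      (thetaBlocks g h i).count true + 2 * ∑ k ∈ Finset.Icc 1 i, h k := by
  induction i with
  | zero => rfl
  | succ i ih =>
    have hlast := count_false_theta_add_two_mul (g (i + 1)) (h (i + 1))
      (hg _ le_add_self le_rfl) (hh _ le_add_self le_rfl)
    have hprev := ih (fun k hk hki => hg k hk (by omega)) (fun k hk hki => hh k hk (by omega))
    simp only [thetaBlocks, List.range_succ, List.flatMap_append, List.flatMap_singleton,
      List.count_append, Finset.sum_Icc_succ_top (le_add_self : 1 ≤ i + 1)] at hprev ⊢
    omega

theorem consecutive_columns_iff_dyck_prefix_general (n : ℕ) (g h : ℕ → ℕ)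
    (hg : ∀ k, 1 ≤ k → k ≤ n - 1 → g k = 0 ∨ g k = 1)
    (hh : ∀ k, 1 ≤ k → k ≤ n → h k = 0 ∨ h k = 1) :
    (∀ i, i ≤ n - 1 →
        ∑ k ∈ Finset.Icc 1 i, h k ≤ ∑ k ∈ Finset.Icc 1 i, g k) ↔
    IsDyckPrefix (phi n g h) := by
  have hcount : ∀ i ≤ n - 1, (thetaBlocks g h i).count false + 2 * ∑ k ∈ Finset.Icc 1 i, g k =
      (thetaBlocks g h i).count true + 2 * ∑ k ∈ Finset.Icc 1 i, h k := fun i hi =>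
    count_false_thetaBlocks_add_two_mul_sum g h i (fun k hk hki => hg k hk (by omega))
      (fun k hk hki => hh k hk (by omega))
  simp only [isDyckPrefix_iff_forall_take_odd, phi_eq_cons_thetaBlocks, List.take_succ_cons,
    take_two_mul_thetaBlocks, List.count_cons_self,
    List.count_cons_of_ne (by decide : true ≠ false)]
  constructor
  · intro hcol i
    have hblock := hcount _ (min_le_right i (n - 1))
    have hsum := hcol _ (min_le_right i (n - 1))
    omega
  · intro hodd i hi
    have hblock := hcount i hi
    have hheight := hodd i
    rw [min_eq_left hi] at hheight
    omega

/-- Words `g` and `h` over `{0,1}`, of lengths `n-1` and `n`, correspond to two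
consecutive columns in the shape of a gapless monotone triangle (i.e. for every
`i ≤ n-1`, `∑_{k=1}^i h k ≤ ∑_{k=1}^i g k`) iff `phi n g h` is a prefix of a
Dyck word. -/
theorem consecutive_columns_iff_dyck_prefix (n : ℕ) (hn : 1 ≤ n) (g h : ℕ → ℕ)
    (hg : ∀ k, 1 ≤ k → k ≤ n - 1 → g k = 0 ∨ g k = 1)
    (hh : ∀ k, 1 ≤ k → k ≤ n → h k = 0 ∨ h k = 1) :
    (∀ i, i ≤ n - 1 →
        ∑ k ∈ Finset.Icc 1 i, h k ≤ ∑ k ∈ Finset.Icc 1 i, g k) ↔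
    IsDyckPrefix (phi n g h) :=
  consecutive_columns_iff_dyck_prefix_general n g h hg hh
end

section
/- The number of pairs of words (g,h) over the alphabet {0,1} with |h| = |g| + 1 = n such that g and h can represent consecutive columns in the shape of a gapless monotone triangle (i.e., for every i ≤ n-1, Σ_{k=1}^{i} g_k ≥ Σ_{k=1}^{i} h_k) is equal to the central binomial coefficient C(2n, n). -/
/-!
Split off the last letter of `h`, which the condition never sees; this gives a factor `2`.
For two words `g, h` of the same length `m`, let `excessCount m d` count the pairs in which
every prefix sum of `g` dominates that of `h` and the total of `g` exceeds that of `h` by at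
least `d`. Appending one letter to each word gives the recursion
`E(m+1, d) = E(m, d-1) + 2 E(m, d) + E(m, d+1)`, which is Pascal's rule applied twice, so
`E(m, d) = C(2m+1, m+1+d)`. Hence the count is `2 C(2m+1, m+1) = C(2m+2, m+1)`.
-/

open Finset

namespace MonotoneTriangle

variable {m : ℕ}

def prefixSum (f : Fin m → Fin 2) (i : ℕ) : ℕ :=
  ∑ k ∈ univ.filter (fun k : Fin m => (k : ℕ) < i), (f k : ℕ)

lemma prefixSum_of_le (f : Fin m → Fin 2) {i : ℕ} (hi : m ≤ i) :
    prefixSum f i = ∑ k, (f k : ℕ) := by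
  rw [prefixSum, filter_true_of_mem fun k _ => k.isLt.trans_le hi]

lemma prefixSum_snoc (f : Fin m → Fin 2) (a : Fin 2) (i : ℕ) :
    prefixSum (Fin.snoc f a) i = prefixSum f i + if m < i then (a : ℕ) else 0 := by
  simp [prefixSum, sum_filter, Fin.sum_univ_castSucc]

lemma prefixSum_snoc_of_le (f : Fin m → Fin 2) (a : Fin 2) {i : ℕ} (hi : i ≤ m) :
    prefixSum (Fin.snoc f a) i = prefixSum f i := by
  simp [prefixSum_snoc, hi.not_gt]

lemma prefixSum_snoc_succ (f : Fin m → Fin 2) (a : Fin 2) :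
    prefixSum (Fin.snoc f a) (m + 1) = prefixSum f m + a := by
  rw [prefixSum_snoc, if_pos m.lt_succ_self, prefixSum_of_le f m.le_succ, prefixSum_of_le f le_rfl]

def Dominates (g h : Fin m → Fin 2) : Prop :=
  ∀ i ≤ m, prefixSum h i ≤ prefixSum g i

lemma Dominates.prefixSum_le {g h : Fin m → Fin 2} (hd : Dominates g h) :
    prefixSum h m ≤ prefixSum g m :=
  hd m le_rfl

lemma dominates_snoc_iff (g h : Fin m → Fin 2) (a b : Fin 2) :
    Dominates (Fin.snoc g a) (Fin.snoc h b) ↔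
      Dominates g h ∧ prefixSum h m + b ≤ prefixSum g m + a := by
  constructor
  · intro hd
    refine ⟨fun i hi => ?_, ?_⟩
    · simpa only [prefixSum_snoc_of_le _ _ hi] using hd i hi.step
    · simpa only [prefixSum_snoc_succ] using hd (m + 1) le_rfl
  · rintro ⟨hd, hlast⟩ i hi
    rcases Nat.le_succ_iff.mp hi with hi | rfl
    · simpa only [prefixSum_snoc_of_le _ _ hi] using hd i hi
    · simpa only [prefixSum_snoc_succ] using hlast

noncomputable def excessCount (m d : ℕ) : ℕ :=
  Nat.card {p : (Fin m → Fin 2) × (Fin m → Fin 2) //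
    Dominates p.1 p.2 ∧ prefixSum p.2 m + d ≤ prefixSum p.1 m}

lemma card_dominates_add_le_add_eq_excessCount (d : ℕ) (a b : Fin 2) :
    Nat.card {q : (Fin m → Fin 2) × (Fin m → Fin 2) //
      Dominates q.1 q.2 ∧ prefixSum q.2 m + b + d ≤ prefixSum q.1 m + a} =
      excessCount m (d + b - a) :=
  -- when `d + b < a`, the truncated subtraction gives `0`, which domination makes correct
  Nat.card_congr <| Equiv.subtypeEquivRight fun q => and_congr_right fun hd => by
    have := hd.prefixSum_le
    omega

lemma excessCount_zero_left (d : ℕ) : excessCount 0 d = if d = 0 then 1 else 0 := by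
  split_ifs with hd
  · subst hd
    rw [excessCount, Nat.card_congr (Equiv.subtypeUnivEquiv fun p => ?_)]
    · simp
    · simp [Dominates, prefixSum]
  · rw [excessCount, Nat.card_eq_zero]
    left
    constructor
    rintro ⟨p, -, hp⟩
    simp [prefixSum] at hp
    exact hd hp

lemma excessCount_zero_right (m : ℕ) :
    excessCount m 0 = Nat.card {q : (Fin m → Fin 2) × (Fin m → Fin 2) // Dominates q.1 q.2} :=
  Nat.card_congr <| Equiv.subtypeEquivRight fun _ => and_iff_left_of_imp fun hd => by
    simpa using hd.prefixSum_le

lemma excessCount_succ_left (m d : ℕ) :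
    excessCount (m + 1) d =
      excessCount m (d - 1) + 2 * excessCount m d + excessCount m (d + 1) := by
  let snocPair : (Fin 2 × Fin 2) × ((Fin m → Fin 2) × (Fin m → Fin 2)) ≃
      (Fin (m + 1) → Fin 2) × (Fin (m + 1) → Fin 2) :=
    (Equiv.prodProdProdComm _ _ _ _).trans
      (Equiv.prodCongr (Fin.snocEquiv fun _ => Fin 2) (Fin.snocEquiv fun _ => Fin 2))
  have hsplit : excessCount (m + 1) d =
      ∑ ab : Fin 2 × Fin 2, excessCount m (d + ab.2 - ab.1) := by
    simp only [← card_dominates_add_le_add_eq_excessCount]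
    rw [excessCount, ← Nat.card_sigma]
    refine Nat.card_congr (snocPair.subtypeEquivOfSubtype.symm.trans
      ((Equiv.subtypeProdEquivSigmaSubtype fun ab q => Dominates (snocPair (ab, q)).1
        (snocPair (ab, q)).2 ∧ prefixSum (snocPair (ab, q)).2 (m + 1) + d ≤
          prefixSum (snocPair (ab, q)).1 (m + 1)).trans
        (Equiv.sigmaCongrRight fun ab => Equiv.subtypeEquivRight fun q => ?_)))
    rcases ab with ⟨a, b⟩
    rcases q with ⟨g, h⟩
    change Dominates (Fin.snoc g a) (Fin.snoc h b) ∧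
        prefixSum (Fin.snoc h b) (m + 1) + d ≤ prefixSum (Fin.snoc g a) (m + 1) ↔ _
    rw [dominates_snoc_iff, prefixSum_snoc_succ, prefixSum_snoc_succ, and_assoc]
    dsimp only
    exact and_congr_right fun _ => by omega
  rw [hsplit, Fintype.sum_prod_type, Fin.sum_univ_two, Fin.sum_univ_two, Fin.sum_univ_two]
  simp only [Fin.val_zero, Fin.val_one, add_zero, Nat.sub_zero, Nat.add_sub_cancel]
  ring

lemma choose_add_two_add_two (n k : ℕ) :
    (n + 2).choose (k + 2) = n.choose k + 2 * n.choose (k + 1) + n.choose (k + 2) := by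
  rw [Nat.choose_succ_succ', Nat.choose_succ_succ', Nat.choose_succ_succ']
  ring

theorem excessCount_eq_choose (m d : ℕ) : excessCount m d = (2 * m + 1).choose (m + 1 + d) := by
  induction m generalizing d with
  | zero =>
    rcases d with _ | d
    · simp [excessCount_zero_left]
    · simp [excessCount_zero_left, Nat.choose_eq_zero_of_lt]
  | succ m ih =>
    rw [excessCount_succ_left, ih, ih, ih,
      show 2 * (m + 1) + 1 = 2 * m + 1 + 2 by ring, show m + 1 + 1 + d = m + d + 2 by ring,
      choose_add_two_add_two]
    rcases d with _ | d
    · simp only [Nat.zero_sub, add_zero, ← Nat.choose_symm_half m]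
    · simp only [Nat.add_sub_cancel]
      ring_nf

def splitLastEquiv (m : ℕ) :
    {p : (Fin m → Fin 2) × (Fin (m + 1) → Fin 2) //
      ∀ i ≤ m, prefixSum p.2 i ≤ prefixSum p.1 i} ≃
      Fin 2 × {q : (Fin m → Fin 2) × (Fin m → Fin 2) // Dominates q.1 q.2} where
  toFun p := (p.1.2 (Fin.last m), ⟨(p.1.1, Fin.init p.1.2), fun i hi => by
    have hp := p.2 i hi
    rwa [← Fin.snoc_init_self p.1.2, prefixSum_snoc_of_le _ _ hi] at hp⟩)
  invFun x := ⟨(x.2.1.1, Fin.snoc x.2.1.2 x.1), fun i hi => by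
    simpa only [prefixSum_snoc_of_le _ _ hi] using x.2.2 i hi⟩
  left_inv p := by ext1; exact Prod.ext rfl (Fin.snoc_init_self p.1.2)
  right_inv
    | ⟨a, ⟨_, h⟩, _⟩ => Prod.ext (Fin.snoc_last (α := fun _ => Fin 2) a h)
        (Subtype.ext (Prod.ext rfl (Fin.init_snoc (α := fun _ => Fin 2) a h)))

end MonotoneTriangle

open MonotoneTriangle in
/-- The number of pairs of 0/1-words `(g, h)` with `|h| = |g| + 1 = n` such that `g`
and `h` can represent consecutive columns in the shape of a gapless monotone triangle
(i.e. for every `i ≤ n - 1` the partial sums satisfy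
`∑_{k=1}^i g k ≥ ∑_{k=1}^i h k`) equals the central binomial coefficient `C(2n, n)`.
Here `g` is modelled as a function `Fin (n-1) → Fin 2` (the `k`-th letter of the word,
`1 ≤ k ≤ n-1`, being `g ⟨k-1, _⟩`), and similarly for `h`. -/
theorem card_consecutive_column_pairs (n : ℕ) (hn : 1 ≤ n) :
    Nat.card {p : (Fin (n - 1) → Fin 2) × (Fin n → Fin 2) //
      ∀ i, i ≤ n - 1 →
        ∑ k ∈ Finset.univ.filter (fun k : Fin n => (k : ℕ) < i), ((p.2 k : ℕ))
          ≤ ∑ k ∈ Finset.univ.filter (fun k : Fin (n - 1) => (k : ℕ) < i), ((p.1 k : ℕ))} =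
    Nat.choose (2 * n) n := by
  obtain ⟨m, rfl⟩ : ∃ m, n = m + 1 := ⟨n - 1, by omega⟩
  calc _ = Nat.card (Fin 2 × {q : (Fin m → Fin 2) × (Fin m → Fin 2) // Dominates q.1 q.2}) :=
        Nat.card_congr (splitLastEquiv m)
    _ = 2 * (2 * m + 1).choose (m + 1) := by
        rw [Nat.card_prod, ← excessCount_zero_right, excessCount_eq_choose]
        simp
    _ = (2 * (m + 1)).choose (m + 1) := by
        rw [show 2 * (m + 1) = 2 * m + 1 + 1 by ring, Nat.choose_succ_succ' (2 * m + 1) m,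
          Nat.choose_symm_half]
        ring
end

section
/- For positive integers p and m, the number of gapless rectangular shapes with p rows and m columns is equal to the number of p-branchings all of whose entries are less than or equal to m+1. -/
/-- A gapless rectangular shape with `p` rows and `m` columns: a 0/1 array `r i j`
(`1 ≤ i ≤ p`, `1 ≤ j ≤ m`, and `r i j = 0` outside this range) such that for all
`1 ≤ j < m` and `1 ≤ i ≤ p`, `∑_{k=i}^p r k j ≤ ∑_{k=i}^p r k (j+1)`. -/
def IsGaplessRect (p m : ℕ) (r : ℕ → ℕ → ℕ) : Prop :=
  (∀ i j, 1 ≤ i → i ≤ p → 1 ≤ j → j ≤ m → r i j = 0 ∨ r i j = 1) ∧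
  (∀ i j, i < 1 ∨ p < i ∨ j < 1 ∨ m < j → r i j = 0) ∧
  (∀ j, 1 ≤ j → j < m → ∀ i, 1 ≤ i → i ≤ p →
     ∑ k ∈ Finset.Icc i p, r k j ≤ ∑ k ∈ Finset.Icc i p, r k (j + 1))

/-- A `p`-branching: a triangular array of positive integers `b i j`
(`1 ≤ i ≤ p`, `1 ≤ j ≤ p + 1 - i`, and `b i j = 0` outside this range), weakly
increasing along rows and weakly decreasing down columns. -/
def IsPBranching (p : ℕ) (b : ℕ → ℕ → ℕ) : Prop :=
  (∀ i j, 1 ≤ i → i ≤ p → 1 ≤ j → j ≤ p + 1 - i → 1 ≤ b i j) ∧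
  (∀ i j, i < 1 ∨ p < i ∨ j < 1 ∨ p + 1 - i < j → b i j = 0) ∧
  (∀ i j, 1 ≤ i → i + 1 ≤ p → 1 ≤ j → j ≤ p + 1 - (i + 1) → b (i + 1) j ≤ b i j) ∧
  (∀ i j, 1 ≤ i → i ≤ p → 1 ≤ j → j + 1 ≤ p + 1 - i → b i j ≤ b i (j + 1))


/-!
Encode column `l` of a gapless shape `r` by its sums `s_l(d)` over the bottom `d` rows. Being
0/1 means `s_l(d + 1) - s_l(d) ∈ {0, 1}`, and gaplessness says exactly that `s_l(d)` increases
weakly with `l`. Put `b(i, j) = 1 + #{l | i ≤ s_l(i + j - 1)}`: the `d`-th antidiagonal of `b`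
is then, up to the shift by one, the partition conjugate to `s_1(d) ≤ ⋯ ≤ s_m(d)`, so it
determines these values back. Under conjugation the 0/1 steps from `d` to `d + 1` turn into
the interlacing of consecutive antidiagonals, which is what the row and column monotonicity
of a branching amounts to.
-/

open Finset

theorem le_card_filter_Icc_iff_of_antitoneOn {P : ℕ → Prop} [DecidablePred P] {n i : ℕ}
    (hP : AntitoneOn P (Set.Icc 1 n)) (hi : i ∈ Set.Icc 1 n) :
    i ≤ #{x ∈ Icc 1 n | P x} ↔ P i := by
  constructor
  · intro hcard
    by_contra hPi
    have hsub : {x ∈ Icc 1 n | P x} ⊆ Icc 1 (i - 1) := by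
      intro x hx
      simp only [mem_filter, mem_Icc] at hx ⊢
      refine ⟨hx.1.1, Nat.le_sub_one_of_lt (lt_of_not_ge fun hix => hPi ?_)⟩
      exact hP hi ⟨hx.1.1, hx.1.2⟩ hix hx.2
    have := card_le_card hsub
    simp only [Nat.card_Icc] at this
    have := hi.1
    omega
  · intro hPi
    calc i = #(Icc 1 i) := by simp
      _ ≤ #{x ∈ Icc 1 n | P x} := card_le_card fun x hx => by
        simp only [mem_filter, mem_Icc] at hx ⊢
        exact ⟨⟨hx.1, hx.2.trans hi.2⟩, hP ⟨hx.1, hx.2.trans hi.2⟩ hi hx.2 hPi⟩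

theorem le_card_filter_Icc_iff_of_monotoneOn {P : ℕ → Prop} [DecidablePred P] {n i : ℕ}
    (hP : MonotoneOn P (Set.Icc 1 n)) (hi : i ∈ Set.Icc 1 n) :
    n + 1 - i ≤ #{x ∈ Icc 1 n | P x} ↔ P i := by
  have hsplit : #{x ∈ Icc 1 n | P x} + #{x ∈ Icc 1 n | ¬P x} = n + 1 - 1 :=
    (card_filter_add_card_filter_not P).trans (Nat.card_Icc 1 n)
  rw [← not_iff_not, ← le_card_filter_Icc_iff_of_antitoneOn (P := (¬P ·))
    (fun x hx y hy hxy hPy hPx => hPy (hP hx hy hxy hPx)) hi]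
  have := hi.2
  omega

def bottomSum (p : ℕ) (r : ℕ → ℕ → ℕ) (l d : ℕ) : ℕ := ∑ k ∈ range d, r (p - k) l

theorem bottomSum_succ (p : ℕ) (r : ℕ → ℕ → ℕ) (l d : ℕ) :
    bottomSum p r l (d + 1) = bottomSum p r l d + r (p - d) l :=
  sum_range_succ _ _

theorem sum_Icc_eq_bottomSum (p : ℕ) (r : ℕ → ℕ → ℕ) (l i : ℕ) :
    ∑ k ∈ Icc i p, r k l = bottomSum p r l (p + 1 - i) := by
  rw [bottomSum, range_eq_Ico, sum_Ico_reflect (fun k => r k l) 0 (by omega)]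
  congr 1
  ext k
  simp only [mem_Icc, mem_Ico]
  omega

/-- Conjugating the `d`-th antidiagonal of `b` back recovers the bottom sum of column `l`. -/
def antidiagCount (m : ℕ) (b : ℕ → ℕ → ℕ) (l d : ℕ) : ℕ :=
  #{i ∈ Icc 1 d | m + 2 - l ≤ b i (d + 1 - i)}

def toBranching (p m : ℕ) (r : ℕ → ℕ → ℕ) (i j : ℕ) : ℕ :=
  if 1 ≤ i ∧ i ≤ p ∧ 1 ≤ j ∧ j ≤ p + 1 - i then
    #{l ∈ Icc 1 m | i ≤ bottomSum p r l (i + j - 1)} + 1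
  else 0

def toGaplessRect (p m : ℕ) (b : ℕ → ℕ → ℕ) (i l : ℕ) : ℕ :=
  if 1 ≤ i ∧ i ≤ p ∧ 1 ≤ l ∧ l ≤ m then
    antidiagCount m b l (p + 1 - i) - antidiagCount m b l (p - i)
  else 0

theorem toBranching_le (p m : ℕ) (r : ℕ → ℕ → ℕ) (i j : ℕ) : toBranching p m r i j ≤ m + 1 := by
  unfold toBranching
  split_ifs
  · have := card_filter_le (Icc 1 m) (fun l => i ≤ bottomSum p r l (i + j - 1))
    rw [Nat.card_Icc] at this
    omega
  · omega

theorem antidiagCount_le (m : ℕ) (b : ℕ → ℕ → ℕ) (l d : ℕ) : antidiagCount m b l d ≤ d :=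
  (card_filter_le _ _).trans_eq (by simp)

theorem antidiagCount_mono_left (m : ℕ) (b : ℕ → ℕ → ℕ) {l l' : ℕ} (hl : l ≤ l') (d : ℕ) :
    antidiagCount m b l d ≤ antidiagCount m b l' d :=
  card_le_card (monotone_filter_right _ fun _ _ h => le_trans (by omega) h)

namespace IsGaplessRect

variable {p m : ℕ} {r : ℕ → ℕ → ℕ}

theorem le_one (hr : IsGaplessRect p m r) {i l : ℕ} (hi1 : 1 ≤ i) (hi2 : i ≤ p)
    (hl1 : 1 ≤ l) (hl2 : l ≤ m) : r i l ≤ 1 := by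
  rcases hr.1 i l hi1 hi2 hl1 hl2 with h | h <;> omega

theorem bottomSum_succ_le (hr : IsGaplessRect p m r) {l d : ℕ} (hl1 : 1 ≤ l) (hl2 : l ≤ m)
    (hd : d < p) : bottomSum p r l (d + 1) ≤ bottomSum p r l d + 1 := by
  rw [bottomSum_succ]
  exact Nat.add_le_add_left (hr.le_one (by omega) (by omega) hl1 hl2) _

theorem bottomSum_le (hr : IsGaplessRect p m r) {l d : ℕ} (hl1 : 1 ≤ l) (hl2 : l ≤ m)
    (hd : d ≤ p) : bottomSum p r l d ≤ d := by
  induction d with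
  | zero => simp [bottomSum]
  | succ d ih => have := hr.bottomSum_succ_le hl1 hl2 hd; have := ih (by omega); omega

theorem bottomSum_monotoneOn (hr : IsGaplessRect p m r) {d : ℕ} (hd : d ≤ p) :
    MonotoneOn (bottomSum p r · d) (Set.Icc 1 m) := by
  refine monotoneOn_of_le_succ Set.ordConnected_Icc fun l _ hl hl' => ?_
  simp only [Order.succ_eq_add_one, Set.mem_Icc] at hl hl' ⊢
  rcases Nat.eq_zero_or_pos d with rfl | hd0
  · simp [bottomSum]
  · have := hr.2.2 l hl.1 (by omega) (p + 1 - d) (by omega) (by omega)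
    rwa [sum_Icc_eq_bottomSum, sum_Icc_eq_bottomSum,
      show p + 1 - (p + 1 - d) = d by omega] at this

theorem isPBranching_toBranching (hr : IsGaplessRect p m r) :
    IsPBranching p (toBranching p m r) := by
  refine ⟨fun i j hi1 hi2 hj1 hj2 => ?_, fun i j h => ?_, fun i j hi1 hi2 hj1 hj2 => ?_,
    fun i j hi1 hi2 hj1 hj2 => ?_⟩
  · rw [toBranching, if_pos ⟨hi1, hi2, hj1, hj2⟩]
    omega
  · rw [toBranching, if_neg (by omega)]
  · rw [toBranching, if_pos ⟨by omega, hi2, hj1, by omega⟩, toBranching,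
      if_pos ⟨hi1, by omega, hj1, by omega⟩, add_le_add_iff_right]
    refine card_le_card (monotone_filter_right _ fun l hl h => ?_)
    rw [mem_Icc] at hl
    have := hr.bottomSum_succ_le (d := i + j - 1) hl.1 hl.2 (by omega)
    rw [show i + 1 + j - 1 = i + j - 1 + 1 by omega] at h
    omega
  · rw [toBranching, if_pos ⟨hi1, hi2, hj1, by omega⟩, toBranching,
      if_pos ⟨hi1, hi2, by omega, hj2⟩, add_le_add_iff_right]
    refine card_le_card (monotone_filter_right _ fun l _ h => h.trans ?_)
    rw [show i + (j + 1) - 1 = i + j - 1 + 1 by omega, bottomSum_succ]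
    omega

theorem antidiagCount_toBranching (hr : IsGaplessRect p m r) {l d : ℕ} (hl1 : 1 ≤ l)
    (hl2 : l ≤ m) (hd : d ≤ p) :
    antidiagCount m (toBranching p m r) l d = bottomSum p r l d := by
  have hcount : ∀ i ∈ Icc 1 d, m + 2 - l ≤ toBranching p m r i (d + 1 - i) ↔
      i ≤ bottomSum p r l d := by
    intro i hi
    rw [mem_Icc] at hi
    rw [toBranching, if_pos ⟨hi.1, by omega, by omega, by omega⟩,
      show i + (d + 1 - i) - 1 = d by omega,
      ← le_card_filter_Icc_iff_of_monotoneOn (P := fun l => i ≤ bottomSum p r l d)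
        (fun x hx y hy hxy h => h.trans (hr.bottomSum_monotoneOn hd hx hy hxy)) ⟨hl1, hl2⟩]
    omega
  have hinterval : {i ∈ Icc 1 d | i ≤ bottomSum p r l d} = Icc 1 (bottomSum p r l d) := by
    have := hr.bottomSum_le hl1 hl2 hd
    ext i
    simp only [mem_filter, mem_Icc]
    omega
  rw [antidiagCount, filter_congr hcount, hinterval, Nat.card_Icc, Nat.add_sub_cancel]

theorem toGaplessRect_toBranching (hr : IsGaplessRect p m r) :
    toGaplessRect p m (toBranching p m r) = r := by
  funext i l
  unfold toGaplessRect
  split_ifs with h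
  · obtain ⟨hi1, hi2, hl1, hl2⟩ := h
    rw [hr.antidiagCount_toBranching hl1 hl2 (by omega),
      hr.antidiagCount_toBranching hl1 hl2 (by omega), show p + 1 - i = p - i + 1 by omega,
      bottomSum_succ, show p - (p - i) = i by omega]
    omega
  · exact (hr.2.1 i l (by omega)).symm

end IsGaplessRect

namespace IsPBranching

variable {p m : ℕ} {b : ℕ → ℕ → ℕ}

theorem antidiag_antitoneOn (hb : IsPBranching p b) {d : ℕ} (hd : d ≤ p) :
    AntitoneOn (fun i => b i (d + 1 - i)) (Set.Icc 1 d) := by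
  refine antitoneOn_of_succ_le Set.ordConnected_Icc fun i _ hi hi' => ?_
  simp only [Order.succ_eq_add_one, Set.mem_Icc] at hi hi' ⊢
  calc b (i + 1) (d + 1 - (i + 1)) ≤ b i (d - i) := by
        rw [Nat.add_sub_add_right]
        exact hb.2.2.1 i (d - i) hi.1 (by omega) (by omega) (by omega)
    _ ≤ b i (d - i + 1) := hb.2.2.2 i (d - i) hi.1 (by omega) (by omega) (by omega)
    _ = b i (d + 1 - i) := by rw [show d - i + 1 = d + 1 - i by omega]

theorem le_antidiagCount_iff (hb : IsPBranching p b) {l d i : ℕ} (hd : d ≤ p) (hi1 : 1 ≤ i)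
    (hi2 : i ≤ d) : i ≤ antidiagCount m b l d ↔ m + 2 - l ≤ b i (d + 1 - i) :=
  le_card_filter_Icc_iff_of_antitoneOn
    (fun _ hx _ hy hxy h => h.trans (hb.antidiag_antitoneOn hd hx hy hxy)) ⟨hi1, hi2⟩

theorem antidiagCount_le_succ (hb : IsPBranching p b) {l d : ℕ} (hd : d < p) :
    antidiagCount m b l d ≤ antidiagCount m b l (d + 1) := by
  set k := antidiagCount m b l d
  have hkd : k ≤ d := antidiagCount_le m b l d
  rcases Nat.eq_zero_or_pos k with hk0 | hk0
  · omega
  have hPk := (hb.le_antidiagCount_iff hd.le hk0 hkd).mp le_rfl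
  refine (hb.le_antidiagCount_iff hd hk0 (by omega)).mpr (hPk.trans ?_)
  rw [show d + 1 + 1 - k = d + 1 - k + 1 by omega]
  exact hb.2.2.2 k (d + 1 - k) hk0 (by omega) (by omega) (by omega)

theorem antidiagCount_succ_le (hb : IsPBranching p b) {l d : ℕ} (hd : d < p) :
    antidiagCount m b l (d + 1) ≤ antidiagCount m b l d + 1 := by
  set k := antidiagCount m b l (d + 1)
  have hkd : k ≤ d + 1 := antidiagCount_le m b l (d + 1)
  rcases Nat.lt_or_ge k 2 with hk2 | hk2
  · omega
  have hPk := (hb.le_antidiagCount_iff hd (by omega) hkd).mp le_rfl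
  have hcol := hb.2.2.1 (k - 1) (d + 2 - k) (by omega) (by omega) (by omega) (by omega)
  rw [Nat.sub_add_cancel (by omega : 1 ≤ k)] at hcol
  rw [show d + 1 + 1 - k = d + 2 - k by omega] at hPk
  suffices k - 1 ≤ antidiagCount m b l d by omega
  refine (hb.le_antidiagCount_iff hd.le (by omega) (by omega)).mpr ?_
  rw [show d + 1 - (k - 1) = d + 2 - k by omega]
  exact hPk.trans hcol

theorem bottomSum_toGaplessRect (hb : IsPBranching p b) {l d : ℕ} (hl1 : 1 ≤ l) (hl2 : l ≤ m)
    (hd : d ≤ p) : bottomSum p (toGaplessRect p m b) l d = antidiagCount m b l d := by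
  induction d with
  | zero => simp [bottomSum, antidiagCount]
  | succ d ih =>
    rw [bottomSum_succ, ih (by omega), toGaplessRect, if_pos ⟨by omega, by omega, hl1, hl2⟩,
      show p + 1 - (p - d) = d + 1 by omega, show p - (p - d) = d by omega]
    have := hb.antidiagCount_le_succ (m := m) (l := l) (d := d) (by omega)
    omega

theorem isGaplessRect_toGaplessRect (hb : IsPBranching p b) :
    IsGaplessRect p m (toGaplessRect p m b) := by
  refine ⟨fun i l hi1 hi2 hl1 hl2 => ?_, fun i l h => ?_, fun l hl1 hl2 i hi1 hi2 => ?_⟩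
  · rw [toGaplessRect, if_pos ⟨hi1, hi2, hl1, hl2⟩, show p + 1 - i = p - i + 1 by omega]
    have := hb.antidiagCount_le_succ (m := m) (l := l) (d := p - i) (by omega)
    have := hb.antidiagCount_succ_le (m := m) (l := l) (d := p - i) (by omega)
    omega
  · rw [toGaplessRect, if_neg (by omega)]
  · rw [sum_Icc_eq_bottomSum, sum_Icc_eq_bottomSum, hb.bottomSum_toGaplessRect hl1 hl2.le
      (by omega), hb.bottomSum_toGaplessRect (by omega) hl2 (by omega)]
    exact antidiagCount_mono_left m b (Nat.le_succ l) _

theorem toBranching_toGaplessRect (hb : IsPBranching p b)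
    (hbm : ∀ i j, 1 ≤ i → i ≤ p → 1 ≤ j → j ≤ p + 1 - i → b i j ≤ m + 1) :
    toBranching p m (toGaplessRect p m b) = b := by
  funext i j
  unfold toBranching
  split_ifs with h
  · obtain ⟨hi1, hi2, hj1, hj2⟩ := h
    have hb1 := hb.1 i j hi1 hi2 hj1 hj2
    have hbm := hbm i j hi1 hi2 hj1 hj2
    have hcount : ∀ l ∈ Icc 1 m,
        i ≤ bottomSum p (toGaplessRect p m b) l (i + j - 1) ↔ m + 2 - b i j ≤ l := by
      intro l hl
      rw [mem_Icc] at hl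
      rw [hb.bottomSum_toGaplessRect hl.1 hl.2 (by omega),
        hb.le_antidiagCount_iff (by omega) hi1 (by omega), show i + j - 1 + 1 - i = j by omega]
      omega
    have hinterval : {l ∈ Icc 1 m | m + 2 - b i j ≤ l} = Icc (m + 2 - b i j) m := by
      ext l
      simp only [mem_filter, mem_Icc]
      omega
    rw [filter_congr hcount, hinterval, Nat.card_Icc]
    omega
  · exact (hb.2.1 i j (by omega)).symm

end IsPBranching

def gaplessRectEquivBranching (p m : ℕ) :
    {r : ℕ → ℕ → ℕ // IsGaplessRect p m r} ≃
      {b : ℕ → ℕ → ℕ // IsPBranching p b ∧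
        ∀ i j, 1 ≤ i → i ≤ p → 1 ≤ j → j ≤ p + 1 - i → b i j ≤ m + 1} where
  toFun r := ⟨toBranching p m r, r.2.isPBranching_toBranching,
    fun i j _ _ _ _ => toBranching_le p m r i j⟩
  invFun b := ⟨toGaplessRect p m b, b.2.1.isGaplessRect_toGaplessRect⟩
  left_inv r := Subtype.ext r.2.toGaplessRect_toBranching
  right_inv b := Subtype.ext (b.2.1.toBranching_toGaplessRect b.2.2)

theorem card_gapless_rect_eq_card_branchings_general (p m : ℕ) :
    Nat.card {r : ℕ → ℕ → ℕ // IsGaplessRect p m r} =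
    Nat.card {b : ℕ → ℕ → ℕ // IsPBranching p b ∧
      ∀ i j, 1 ≤ i → i ≤ p → 1 ≤ j → j ≤ p + 1 - i → b i j ≤ m + 1} :=
  Nat.card_congr (gaplessRectEquivBranching p m)

/-- The number of gapless rectangular shapes with `p` rows and `m` columns equals the
number of `p`-branchings all of whose entries are at most `m + 1`. -/
theorem card_gapless_rect_eq_card_branchings (p m : ℕ) (hp : 1 ≤ p) (hm : 1 ≤ m) :
    Nat.card {r : ℕ → ℕ → ℕ // IsGaplessRect p m r} =
    Nat.card {b : ℕ → ℕ → ℕ // IsPBranching p b ∧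
      ∀ i j, 1 ≤ i → i ≤ p → 1 ≤ j → j ≤ p + 1 - i → b i j ≤ m + 1} :=
  card_gapless_rect_eq_card_branchings_general p m
end

section
/- Let T = (a_{i,j}) be a monotone triangle of size n and let Δ(T) = (b_{i,j}) be the triangular array defined by b_{i,j} = a_{i,j} + i - j. Then Δ(T) is a Magog triangle of size n if and only if T is gapless; moreover, in that case Δ(T) is a gapless Magog triangle. -/
/-- A Magog triangle of size `n`: a triangular array `b i j` (`1 ≤ j ≤ i ≤ n`) of
positive integers with `i ≤ b i j ≤ n`, weakly increasing down columns
(`b i j ≤ b (i+1) j`) and along rows (`b i j ≤ b i (j+1)`). -/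
def IsMagogTriangle (n : ℕ) (b : ℕ → ℕ → ℕ) : Prop :=
  (∀ i j, 1 ≤ j → j ≤ i → i ≤ n → i ≤ b i j ∧ b i j ≤ n) ∧
  (∀ i j, 1 ≤ j → j ≤ i → i + 1 ≤ n → b i j ≤ b (i + 1) j) ∧
  (∀ i j, 1 ≤ j → j + 1 ≤ i → i ≤ n → b i j ≤ b i (j + 1))

/-- A Magog triangle is gapless if `b (i+1) j - b i j ≤ 1` whenever both are defined. -/
def MagogGapless (n : ℕ) (b : ℕ → ℕ → ℕ) : Prop :=
  ∀ i j, 1 ≤ j → j ≤ i → i + 1 ≤ n → b (i + 1) j ≤ b i j + 1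

/-!
Every entry of a monotone triangle satisfies `j ≤ a i j ≤ j + n - i`: follow the column of
`(i, j)` down to the bottom row for the lower bound, and its diagonal for the upper one.
Hence `b i j = a i j + i - j` lies in `[i, n]`, and the truncated subtraction never bites.
Strict increase along rows of `a` becomes weak increase along rows of `b`, while
`b i j ≤ b (i+1) j` is exactly `a i j ≤ a (i+1) j + 1`, i.e. no gap at `(i, j)`; and the
weak decrease of `a` down columns is exactly gaplessness of `b`.
-/

namespace MonotoneTriangle

variable {n : ℕ} {a : ℕ → ℕ → ℕ}

theorem le_entry (hmt : MonotoneTriangle n a) {i j : ℕ} (hj : 1 ≤ j) (hji : j ≤ i)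
    (hin : i ≤ n) : j ≤ a i j := by
  induction hk : n - i generalizing i with
  | zero =>
    obtain rfl : i = n := by omega
    exact (hmt.2.2.2 j hj hji).ge
  | succ k ih =>
    calc j ≤ a (i + 1) j := ih (by omega) (by omega) (by omega)
      _ ≤ a i j := hmt.2.1 i j hj hji (by omega)

theorem entry_add_le (hmt : MonotoneTriangle n a) {i j : ℕ} (hj : 1 ≤ j) (hji : j ≤ i)
    (hin : i ≤ n) : a i j + i ≤ j + n := by
  induction hk : n - i generalizing i j with
  | zero =>
    obtain rfl : i = n := by omega
    rw [hmt.2.2.2 j hj hji]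
  | succ k ih =>
    have hdiag := hmt.2.2.1 i j hj hji (by omega)
    have := ih (i := i + 1) (j := j + 1) (by omega) (by omega) (by omega) (by omega)
    omega

theorem delta_le_delta_succ_iff (hmt : MonotoneTriangle n a) {i j : ℕ} (hj : 1 ≤ j)
    (hji : j ≤ i) (hin : i + 1 ≤ n) :
    a i j + i - j ≤ a (i + 1) j + (i + 1) - j ↔ a i j ≤ a (i + 1) j + 1 := by
  have := hmt.le_entry hj hji (by omega)
  omega

theorem isMagogTriangle_delta (hmt : MonotoneTriangle n a) (hg : GaplessMT n a) :
    IsMagogTriangle n (fun i j => a i j + i - j) := by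
  refine ⟨fun i j hj hji hin => ?_, fun i j hj hji hin => ?_, fun i j hj hji hin => ?_⟩
  · have := hmt.le_entry hj hji hin
    have := hmt.entry_add_le hj hji hin
    dsimp only
    omega
  · exact (hmt.delta_le_delta_succ_iff hj hji hin).2 (hg i j hj hji hin)
  · have := hmt.le_entry hj (by omega) hin
    have := hmt.1 i j hj hji hin
    dsimp only
    omega

theorem gaplessMT_of_isMagogTriangle_delta (hmt : MonotoneTriangle n a)
    (hb : IsMagogTriangle n (fun i j => a i j + i - j)) : GaplessMT n a :=
  fun i j hj hji hin => (hmt.delta_le_delta_succ_iff hj hji hin).1 (hb.2.1 i j hj hji hin)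

theorem magogGapless_delta (hmt : MonotoneTriangle n a) :
    MagogGapless n (fun i j => a i j + i - j) := by
  intro i j hj hji hin
  have := hmt.2.1 i j hj hji hin
  dsimp only
  omega

end MonotoneTriangle

/-- For a monotone triangle `T = (a i j)`, the triangle `Δ(T) = (a i j + i - j)` is a
Magog triangle iff `T` is gapless; moreover in that case `Δ(T)` is a gapless Magog
triangle. -/
theorem delta_magog_iff_gapless (n : ℕ) (a : ℕ → ℕ → ℕ)
    (hmt : MonotoneTriangle n a) :
    (IsMagogTriangle n (fun i j => a i j + i - j) ↔ GaplessMT n a) ∧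
    (GaplessMT n a →
      IsMagogTriangle n (fun i j => a i j + i - j) ∧
        MagogGapless n (fun i j => a i j + i - j)) :=
  ⟨⟨hmt.gaplessMT_of_isMagogTriangle_delta, hmt.isMagogTriangle_delta⟩,
    fun hg => ⟨hmt.isMagogTriangle_delta hg, hmt.magogGapless_delta⟩⟩
end

section
/- If a permutation π of {1,...,n} contains the pattern 312 at positions (i,j,k) (i.e., i < j < k and π_i > π_k > π_j) with j - i > 1, then there exists an integer l with i ≤ l < j such that π contains a 312 pattern at positions (l, l+1, k), i.e., π_l > π_k > π_{l+1}. -/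
/-! The positions `m ∈ [i, j]` with `π m > π k` include `i` but not `j`, so somewhere the
predicate switches from true to false between consecutive positions `l, l + 1`. Since `π` is
injective and `l + 1 ≤ j < k`, the value `π (l + 1)` differs from `π k`, hence lies below it. -/

theorem Nat.exists_le_lt_and_not_succ {P : ℕ → Prop} {a b : ℕ} (hab : a ≤ b) (ha : P a)
    (hb : ¬ P b) : ∃ l, a ≤ l ∧ l < b ∧ P l ∧ ¬ P (l + 1) := by
  induction b, hab using Nat.le_induction with
  | base => exact absurd ha hb
  | succ b hab ih =>
    by_cases hPb : P b
    · exact ⟨b, hab, b.lt_succ_self, hPb, hb⟩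
    · obtain ⟨l, hal, hlb, hPl, hPl'⟩ := ih hPb
      exact ⟨l, hal, hlb.trans b.lt_succ_self, hPl, hPl'⟩

theorem pattern312_consecutive_general (n : ℕ) (π : ℕ → ℕ)
    (hπ : Set.BijOn π (Set.Icc 1 n) (Set.Icc 1 n))
    (i j k : ℕ) (hij : i < j) (hjk : j < k) (hk : k ≤ n)
    (h1 : π j < π k) (h2 : π k < π i) :
    ∃ l, i ≤ l ∧ l < j ∧ π (l + 1) < π k ∧ π k < π l := by
  obtain ⟨l, hil, hlj, hl, hl'⟩ :=
    Nat.exists_le_lt_and_not_succ (P := fun m => π k < π m) hij.le h2 h1.not_gt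
  have hne : π (l + 1) ≠ π k := fun h =>
    absurd (hπ.injOn ⟨l.succ_pos, by omega⟩ ⟨by omega, hk⟩ h) (by omega)
  exact ⟨l, hil, hlj, lt_of_le_of_ne (not_lt.mp hl') hne, hl⟩

/-- If a permutation `π` of `{1, …, n}` contains the pattern 312 at positions
`(i, j, k)` (i.e. `i < j < k` and `π i > π k > π j`) with `j - i > 1`, then there is
an `l` with `i ≤ l < j` such that `π` contains a 312 pattern at positions
`(l, l+1, k)`, i.e. `π l > π k > π (l+1)`. -/
theorem pattern312_consecutive (n : ℕ) (π : ℕ → ℕ)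
    (hπ : Set.BijOn π (Set.Icc 1 n) (Set.Icc 1 n))
    (i j k : ℕ) (hi : 1 ≤ i) (hij : i < j) (hjk : j < k) (hk : k ≤ n)
    (h1 : π j < π k) (h2 : π k < π i) (hgap : 1 < j - i) :
    ∃ l, i ≤ l ∧ l < j ∧ π (l + 1) < π k ∧ π k < π l :=
  pattern312_consecutive_general n π hπ i j k hij hjk hk h1 h2
end

section
/- Let π be a permutation of {1,...,n} and let 1 ≤ i ≤ n-1. Assume that π does not contain a 312 pattern at any position less than i (i.e., there is no l < i and k > l+1 with π_l > π_k > π_{l+1}). Then π avoids the 312 pattern at position i (there is no k > i+1 with π_i > π_k > π_{i+1}) if and only if the set S_i = {π_j : 1 ≤ j ≤ i+1 and π_j ≥ π_{i+1}} consists of consecutive integers. -/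
/-!
If `π` has no 312 pattern at the positions `1, …, m - 1`, then a later value `π k > π m` exceeds
every value of the prefix `π 1, …, π m`: otherwise, walking from a prefix value above `π k` to
`π m` below it, the sequence crosses `π k` downwards at some position `l`, and `π l, π (l+1), π k`
form a 312 pattern. Hence the values of the prefix lying above `π m` can miss nothing in between,
since the missing value would be some such `π k`. Conversely, if they form an interval, a 312 at
position `i` would put `π k` between `π (i+1)` and `π i`, hence inside the prefix.
-/

open Set

theorem Nat.exists_mem_Icc_and_not_succ {P : ℕ → Prop} {a b : ℕ} (hab : a ≤ b) (ha : P a)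
    (hb : ¬P (b + 1)) : ∃ l ∈ Icc a b, P l ∧ ¬P (l + 1) := by
  induction b, hab using Nat.le_induction with
  | base => exact ⟨a, ⟨le_rfl, le_rfl⟩, ha, hb⟩
  | succ b hab ih =>
    by_cases hP : P (b + 1)
    · exact ⟨b + 1, ⟨by omega, le_rfl⟩, hP, hb⟩
    · obtain ⟨l, ⟨hal, hlb⟩, hl⟩ := ih hP
      exact ⟨l, ⟨hal, by omega⟩, hl⟩

theorem Set.exists_eq_Icc_iff_ordConnected {α : Type*} [ConditionallyCompleteLinearOrder α]
    [LocallyFiniteOrder α] {I : Set α} (h₀ : I.Nonempty) (h₁ : BddBelow I) (h₂ : BddAbove I) :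
    (∃ a b, I = Icc a b) ↔ I.OrdConnected := by
  refine ⟨?_, fun h ↦ ⟨_, _, (h₀.ordConnected_iff_of_bdd h₁ h₂).1 h⟩⟩
  rintro ⟨a, b, rfl⟩
  exact ordConnected_Icc

def Avoids312At (π : ℕ → ℕ) (n l : ℕ) : Prop :=
  ∀ k, l + 1 < k → k ≤ n → ¬(π (l + 1) < π k ∧ π k < π l)

/-- The set `S_i` of the paper is `prefixValuesAbove π (i + 1)`. -/
def prefixValuesAbove (π : ℕ → ℕ) (m : ℕ) : Set ℕ :=
  {x | ∃ j, 1 ≤ j ∧ j ≤ m ∧ π j = x ∧ π m ≤ x}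

section

variable {π : ℕ → ℕ} {n m : ℕ}

theorem prefixValuesAbove_nonempty (hm : 1 ≤ m) : (prefixValuesAbove π m).Nonempty :=
  ⟨π m, m, hm, le_rfl, rfl, le_rfl⟩

theorem prefixValuesAbove_finite : (prefixValuesAbove π m).Finite :=
  ((finite_Icc 1 m).image π).subset fun _ ⟨j, hj1, hjm, hj, _⟩ ↦ ⟨j, ⟨hj1, hjm⟩, hj⟩

theorem lt_of_avoids312At_of_lt (hinj : InjOn π (Icc 1 n))
    (havoid : ∀ l, 1 ≤ l → l < m → Avoids312At π n l) {j k : ℕ} (hj1 : 1 ≤ j) (hjm : j ≤ m)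
    (hmk : m < k) (hkn : k ≤ n) (hlt : π m < π k) : π j < π k := by
  have hne : ∀ l, 1 ≤ l → l ≤ m → π l ≠ π k := fun l hl1 hlm h ↦
    absurd (hinj ⟨hl1, by omega⟩ ⟨by omega, hkn⟩ h) (by omega)
  by_contra! hle
  have hjk : π k < π j := lt_of_le_of_ne hle (hne j hj1 hjm).symm
  have hj_lt_m : j < m := lt_of_le_of_ne hjm (by rintro rfl; omega)
  obtain ⟨l, ⟨hjl, hlm⟩, hkl, hlk⟩ :=
    Nat.exists_mem_Icc_and_not_succ (P := fun l ↦ π k < π l) (a := j) (b := m - 1)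
      (by omega) hjk (by rw [Nat.sub_add_cancel (by omega)]; omega)
  have hlk' : π (l + 1) < π k := lt_of_le_of_ne (not_lt.1 hlk) (hne _ (by omega) (by omega))
  exact havoid l (by omega) (by omega) k (by omega) hkn ⟨hlk', hkl⟩

theorem ordConnected_prefixValuesAbove (hπ : BijOn π (Icc 1 n) (Icc 1 n)) (hmn : m ≤ n)
    (havoid : ∀ l, 1 ≤ l → l < m → Avoids312At π n l) :
    (prefixValuesAbove π m).OrdConnected := by
  refine ordConnected_def.2 fun x ⟨_, _, _, _, hx⟩ y ⟨j, hj1, hjm, hjy, _⟩ z ⟨hxz, hzy⟩ ↦ ?_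
  have hm : m ∈ Icc 1 n := ⟨by omega, hmn⟩
  have hj : j ∈ Icc 1 n := ⟨hj1, by omega⟩
  have hz : z ∈ Icc 1 n :=
    ⟨(hπ.mapsTo hm).1.trans (hx.trans hxz), (hzy.trans_eq hjy.symm).trans (hπ.mapsTo hj).2⟩
  obtain ⟨k, hk, rfl⟩ := hπ.surjOn hz
  by_cases hkm : k ≤ m
  · exact ⟨k, hk.1, hkm, rfl, hx.trans hxz⟩
  · have hmk : π m < π k := lt_of_le_of_ne (hx.trans hxz) fun h ↦
      absurd (hπ.injOn hm hk h) (by omega)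
    have := lt_of_avoids312At_of_lt hπ.injOn havoid hj1 hjm (by omega) hk.2 hmk
    omega

theorem avoids312At_of_ordConnected (hinj : InjOn π (Icc 1 n)) {i : ℕ} (hi : 1 ≤ i)
    (hS : (prefixValuesAbove π (i + 1)).OrdConnected) : Avoids312At π n i := by
  rintro k hik hkn ⟨hlast, hfirst⟩
  have hk : π k ∈ prefixValuesAbove π (i + 1) :=
    hS.out ⟨i + 1, by omega, le_rfl, rfl, le_rfl⟩ ⟨i, hi, by omega, rfl, by omega⟩
      ⟨hlast.le, hfirst.le⟩
  obtain ⟨j, hj1, hji, hj, -⟩ := hk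
  exact absurd (hinj ⟨hj1, by omega⟩ ⟨by omega, hkn⟩ hj) (by omega)

end

/-- Let `π` be a permutation of `{1, …, n}` and `1 ≤ i ≤ n - 1`. Assume `π` contains
no 312 pattern at any position `l < i` (i.e. there are no `l < i` and `k > l + 1`,
`k ≤ n`, with `π l > π k > π (l+1)`). Then `π` avoids the 312 pattern at position `i`
(there is no `k` with `i + 1 < k ≤ n` and `π i > π k > π (i+1)`) iff the set
`S i = {π j : 1 ≤ j ≤ i + 1, π j ≥ π (i+1)}` consists of consecutive integers. -/
theorem avoids312_at_iff_consecutive (n : ℕ) (π : ℕ → ℕ)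
    (hπ : Set.BijOn π (Set.Icc 1 n) (Set.Icc 1 n))
    (i : ℕ) (hi1 : 1 ≤ i) (hi : i ≤ n - 1)
    (hno : ∀ l k, 1 ≤ l → l < i → l + 1 < k → k ≤ n →
      ¬(π (l + 1) < π k ∧ π k < π l)) :
    (∀ k, i + 1 < k → k ≤ n → ¬(π (i + 1) < π k ∧ π k < π i)) ↔
    (∃ mn mx : ℕ,
      {x | ∃ j, 1 ≤ j ∧ j ≤ i + 1 ∧ π j = x ∧ π (i + 1) ≤ x} = Set.Icc mn mx) := by
  change Avoids312At π n i ↔ ∃ mn mx, prefixValuesAbove π (i + 1) = Icc mn mx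
  rw [exists_eq_Icc_iff_ordConnected (prefixValuesAbove_nonempty (by omega))
    (OrderBot.bddBelow _) prefixValuesAbove_finite.bddAbove]
  refine ⟨fun h ↦ ordConnected_prefixValuesAbove hπ (by omega) fun l hl hli ↦ ?_,
    avoids312At_of_ordConnected hπ.injOn hi1⟩
  rcases Nat.lt_succ_iff_lt_or_eq.1 hli with hli | rfl
  · exact fun k ↦ hno l k hl hli
  · exact h
end

section
/- Let π be a permutation of {1,...,n}, let a be the monotone triangle corresponding to π, and let 1 ≤ i ≤ n-1. Assume that π contains no 312 pattern at any position less than i. Then π contains the pattern 312 at position i if and only if the monotone triangle a contains a gap at row i, i.e., there exists j with a_{i,j} - a_{i+1,j} > 1. -/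
/-!
Row `i + 1` of the monotone triangle is row `i` with `π (i + 1)` inserted, and in an increasing
row `r` of length `m` one has `r j ≤ y` iff at least `j` entries are `≤ y`. Comparing these
counts, a gap `a (i+1) j + 1 < a i j` occurs exactly when some value `v` missing from row
`i + 1` satisfies `π (i + 1) < v < π l` for some `l ≤ i`. Such a `v` is `π k` with `k > i + 1`,
and since there is no 312 pattern at the positions `l, l + 1, …, i - 1`, the inequality
`π k < π l` propagates to `π k < π i`.
-/

/-- `a` is the monotone triangle corresponding to the permutation `π` of `{1, …, n}`:
for each `1 ≤ i ≤ n`, the `i`-th row `(a i 1, …, a i i)` is strictly increasing and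
is a rearrangement of `{π 1, …, π i}`. -/
def PermTriangle (n : ℕ) (π : ℕ → ℕ) (a : ℕ → ℕ → ℕ) : Prop :=
  ∀ i, 1 ≤ i → i ≤ n →
    (∀ j j', 1 ≤ j → j < j' → j' ≤ i → a i j < a i j') ∧
    {x | ∃ j, 1 ≤ j ∧ j ≤ i ∧ a i j = x} = {x | ∃ j, 1 ≤ j ∧ j ≤ i ∧ π j = x}

open Finset

namespace Finset

theorem card_filter_le_insert {S : Finset ℕ} {p : ℕ} (hp : p ∉ S) (y : ℕ) :
    #{x ∈ insert p S | x ≤ y} = #{x ∈ S | x ≤ y} + if p ≤ y then 1 else 0 := by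
  rw [filter_insert]
  split_ifs <;> simp [card_insert_of_notMem, hp]

theorem card_filter_le_mono (S : Finset ℕ) {y y' : ℕ} (h : y ≤ y') :
    #{x ∈ S | x ≤ y} ≤ #{x ∈ S | x ≤ y'} :=
  card_le_card <| monotone_filter_right S fun _ _ hx => hx.trans h

theorem card_filter_le_lt_of_succ_mem {S : Finset ℕ} {u : ℕ} (h : u + 1 ∈ S) :
    #{x ∈ S | x ≤ u} < #{x ∈ S | x ≤ u + 1} :=
  card_lt_card <| (ssubset_iff_of_subset (monotone_filter_right S fun _ _ hx => by omega)).2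
    ⟨u + 1, by simp [h], by simp⟩

end Finset

theorem StrictMonoOn.le_iff_le_card_filter {r : ℕ → ℕ} {m j : ℕ}
    (hr : StrictMonoOn r (Set.Icc 1 m)) (hj : j ∈ Set.Icc 1 m) (y : ℕ) :
    r j ≤ y ↔ j ≤ #{x ∈ (Icc 1 m).image r | x ≤ y} := by
  rw [filter_image, card_image_of_injOn (hr.injOn.mono fun l hl => by simp_all)]
  constructor
  · intro hy
    calc j = #(Icc 1 j) := by simp
      _ ≤ _ := card_le_card fun l hl => by
        simp only [mem_Icc] at hl hj ⊢
        simp only [mem_filter, mem_Icc]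
        exact ⟨⟨hl.1, hl.2.trans hj.2⟩, (hr.monotoneOn ⟨hl.1, hl.2.trans hj.2⟩ hj hl.2).trans hy⟩
  · intro hcard
    by_contra! hy
    have hsub : {l ∈ Icc 1 m | r l ≤ y} ⊆ Icc 1 (j - 1) := fun l hl => by
      simp only [mem_filter, mem_Icc] at hl ⊢
      refine ⟨hl.1.1, ?_⟩
      by_contra! hlj
      exact absurd (hr.monotoneOn hj hl.1 (by omega)) (by omega)
    have := card_le_card hsub
    simp only [Nat.card_Icc] at this
    have := hj.1
    omega

theorem exists_gap_iff_exists_skipped {m p : ℕ} {r r' : ℕ → ℕ} {S : Finset ℕ}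
    (hr : StrictMonoOn r (Set.Icc 1 m)) (hr' : StrictMonoOn r' (Set.Icc 1 (m + 1)))
    (hS : (Icc 1 m).image r = S) (hS' : (Icc 1 (m + 1)).image r' = insert p S) (hp : p ∉ S) :
    (∃ j, 1 ≤ j ∧ j ≤ m ∧ r' j + 1 < r j) ↔ ∃ v ∉ insert p S, p < v ∧ ∃ x ∈ S, v < x := by
  have rank : ∀ {j}, 1 ≤ j → j ≤ m → ∀ y, r j ≤ y ↔ j ≤ #{x ∈ S | x ≤ y} :=
    fun h1 h2 y => hS ▸ hr.le_iff_le_card_filter ⟨h1, h2⟩ y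
  have rank' : ∀ {j}, 1 ≤ j → j ≤ m + 1 → ∀ y,
      r' j ≤ y ↔ j ≤ #{x ∈ S | x ≤ y} + if p ≤ y then 1 else 0 :=
    fun h1 h2 y => card_filter_le_insert hp y ▸ hS' ▸ hr'.le_iff_le_card_filter ⟨h1, h2⟩ y
  constructor
  · rintro ⟨j, hj1, hjm, hgap⟩
    set u := r' j
    have hlow := (rank' hj1 (by omega) u).1 le_rfl
    have hhigh : #{x ∈ S | x ≤ u + 1} < j := not_le.1 fun h => by
      have := (rank hj1 hjm (u + 1)).2 h; omega
    have hmono := card_filter_le_mono S (Nat.le_add_right u 1)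
    have hpu : p ≤ u := by
      by_contra hpu
      rw [if_neg hpu] at hlow
      omega
    refine ⟨u + 1, fun hmem => ?_, by omega, r j, hS ▸ mem_image_of_mem r (by simp [hj1, hjm]),
      hgap⟩
    have := card_filter_le_lt_of_succ_mem hmem
    rw [card_filter_le_insert hp, card_filter_le_insert hp, if_pos hpu, if_pos (by omega)] at this
    rw [if_pos hpu] at hlow
    omega
  · rintro ⟨v, hvT, hpv, x, hxS, hvx⟩
    have hcard : #{x ∈ S | x ≤ v} < #S := card_lt_card (filter_ssubset.2 ⟨x, hxS, by omega⟩)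
    have hSm : #S ≤ m := hS ▸ card_image_le.trans (by simp)
    set j := #{x ∈ S | x ≤ v} + 1
    have hr'v : r' j ≤ v := (rank' (by omega) (by omega) v).2 (by rw [if_pos hpv.le])
    have hr'ne : r' j ≠ v := by
      rintro h
      refine hvT (hS' ▸ h ▸ mem_image_of_mem r' ?_)
      simp only [mem_Icc]; omega
    have hrv : v < r j := not_le.1 fun h => by
      have := (rank (by omega) (by omega) v).1 h; omega
    exact ⟨j, by omega, by omega, by omega⟩

theorem PermTriangle.row {n m : ℕ} {π : ℕ → ℕ} {a : ℕ → ℕ → ℕ} (ha : PermTriangle n π a)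
    (hm : 1 ≤ m) (hmn : m ≤ n) :
    StrictMonoOn (a m) (Set.Icc 1 m) ∧ (Icc 1 m).image (a m) = (Icc 1 m).image π := by
  obtain ⟨hmono, hset⟩ := ha m hm hmn
  refine ⟨fun j hj j' hj' hjj' => hmono j j' hj.1 hjj' hj'.2, ?_⟩
  ext x
  simpa [and_assoc] using Set.ext_iff.1 hset x

theorem lt_of_no_pattern312_before {n i k l : ℕ} {π : ℕ → ℕ} (hπ : Set.InjOn π (Set.Icc 1 n))
    (hno : ∀ l k, 1 ≤ l → l < i → l + 1 < k → k ≤ n → ¬(π (l + 1) < π k ∧ π k < π l))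
    (hk : i + 1 < k) (hkn : k ≤ n) (hl : 1 ≤ l) (hli : l ≤ i) (hkl : π k < π l) :
    π k < π i := by
  induction i, hli using Nat.le_induction with
  | base => exact hkl
  | succ i hli ih =>
    have hki : π k < π i := ih (fun l k hl hli => hno l k hl (by omega)) (by omega)
    have hne : π k ≠ π (i + 1) := fun h => by
      have := hπ ⟨by omega, hkn⟩ ⟨by omega, by omega⟩ h; omega
    have := hno i k (by omega) (by omega) (by omega) hkn
    omega

theorem exists_pattern312_iff_exists_skipped {n i : ℕ} {π : ℕ → ℕ}
    (hπ : Set.BijOn π (Set.Icc 1 n) (Set.Icc 1 n)) (hi : 1 ≤ i) (hin : i ≤ n)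
    (hno : ∀ l k, 1 ≤ l → l < i → l + 1 < k → k ≤ n → ¬(π (l + 1) < π k ∧ π k < π l)) :
    (∃ k, i + 1 < k ∧ k ≤ n ∧ π (i + 1) < π k ∧ π k < π i) ↔
      ∃ v ∉ insert (π (i + 1)) ((Icc 1 i).image π), π (i + 1) < v ∧
        ∃ x ∈ (Icc 1 i).image π, v < x := by
  constructor
  · rintro ⟨k, hk, hkn, hpk, hki⟩
    refine ⟨π k, ?_, hpk, π i, mem_image_of_mem π (by simp [hi]), hki⟩
    simp only [mem_insert, mem_image, mem_Icc, not_or, not_exists, not_and]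
    refine ⟨hpk.ne', fun l hl h => ?_⟩
    have := hπ.injOn ⟨hl.1, by omega⟩ ⟨by omega, hkn⟩ h
    omega
  · rintro ⟨v, hv, hpv, x, hx, hvx⟩
    obtain ⟨l, hl, rfl⟩ := mem_image.1 hx
    rw [mem_Icc] at hl
    have hxn : π l ≤ n := (hπ.mapsTo ⟨hl.1, by omega⟩).2
    obtain ⟨k, ⟨hk1, hkn⟩, rfl⟩ := hπ.surjOn (show v ∈ Set.Icc 1 n from ⟨by omega, by omega⟩)
    have hk : i + 1 < k := by
      by_contra! hk
      rw [← image_insert, insert_Icc_right_eq_Icc_add_one (by omega)] at hv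
      exact hv (mem_image_of_mem π (mem_Icc.2 ⟨hk1, hk⟩))
    exact ⟨k, hk, hkn, hpv, lt_of_no_pattern312_before hπ.injOn hno hk hkn hl.1 hl.2 hvx⟩

/-- Let `π` be a permutation of `{1, …, n}` with corresponding monotone triangle `a`,
and let `1 ≤ i ≤ n - 1`. Assume `π` contains no 312 pattern at any position `l < i`.
Then `π` contains a 312 pattern at position `i` (i.e. there is `k` with
`i + 1 < k ≤ n` and `π i > π k > π (i+1)`) iff the triangle `a` has a gap at row `i`,
i.e. there is `j` with `a i j - a (i+1) j > 1`. -/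
theorem pattern312_at_iff_gap (n : ℕ) (π : ℕ → ℕ)
    (hπ : Set.BijOn π (Set.Icc 1 n) (Set.Icc 1 n))
    (a : ℕ → ℕ → ℕ) (ha : PermTriangle n π a)
    (i : ℕ) (hi1 : 1 ≤ i) (hi : i ≤ n - 1)
    (hno : ∀ l k, 1 ≤ l → l < i → l + 1 < k → k ≤ n →
      ¬(π (l + 1) < π k ∧ π k < π l)) :
    (∃ k, i + 1 < k ∧ k ≤ n ∧ π (i + 1) < π k ∧ π k < π i) ↔
    (∃ j, 1 ≤ j ∧ j ≤ i ∧ a (i + 1) j + 1 < a i j) := by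
  obtain ⟨hrow, himg⟩ := ha.row hi1 (by omega)
  obtain ⟨hrow', himg'⟩ := ha.row (m := i + 1) (by omega) (by omega)
  have hins : (Icc 1 (i + 1)).image π = insert (π (i + 1)) ((Icc 1 i).image π) := by
    rw [← image_insert, insert_Icc_right_eq_Icc_add_one (by omega)]
  have hnew : π (i + 1) ∉ (Icc 1 i).image π := by
    simp only [mem_image, mem_Icc, not_exists, not_and]
    intro l hl h
    have := hπ.injOn ⟨hl.1, by omega⟩ ⟨by omega, by omega⟩ h
    omega
  rw [exists_pattern312_iff_exists_skipped hπ hi1 (by omega) hno,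
    exists_gap_iff_exists_skipped hrow hrow' himg (himg'.trans hins) hnew]
end

section
/- If a Gog word w = x_1 x_2 ... x_n contains a 312-subpattern (c, a, b) at positions x_i, x_j, x_k with lengths 2p_i - 1, 2p_j - 1, 2p_k - 1 respectively, then the triple ((x_i)_{2p_i - 1}, (x_j)_1, b), consisting of the last entry of x_i, the first entry of x_j, and b, is also a 312-subpattern of w at the same positions (i, j, k). -/
/-- `v` occurs at an odd-numbered (1-indexed) position of the tuple `t`
(modelled as a list; position `j+1` is odd iff the 0-based index `j` is even). -/
def OddPos (t : List ℕ) (v : ℕ) : Prop :=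
  ∃ j, j < t.length ∧ j % 2 = 0 ∧ t.getD j 0 = v

/-- `v` occurs at an even-numbered (1-indexed) position of the tuple `t`. -/
def EvenPos (t : List ℕ) (v : ℕ) : Prop :=
  ∃ j, j < t.length ∧ j % 2 = 1 ∧ t.getD j 0 = v

/-- A Gog word of size `n`: a sequence `x 1, …, x n` of strictly increasing tuples of
odd length, with entries in `{1, …, n}`, such that every integer occurring in an
even-numbered position of some tuple also occurs at an odd-numbered position of an
earlier and of a later tuple, and the successive occurrences of any repeated integer
alternate between odd- and even-numbered positions. -/
def IsGogWord (n : ℕ) (x : ℕ → List ℕ) : Prop :=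
  (∀ i, 1 ≤ i → i ≤ n → (x i).length % 2 = 1) ∧
  (∀ i, 1 ≤ i → i ≤ n → List.Pairwise (· < ·) (x i)) ∧
  (∀ i, 1 ≤ i → i ≤ n → ∀ v ∈ x i, 1 ≤ v ∧ v ≤ n) ∧
  (∀ i, 1 ≤ i → i ≤ n → ∀ v, EvenPos (x i) v →
     (∃ i', 1 ≤ i' ∧ i' < i ∧ OddPos (x i') v) ∧
     (∃ i', i < i' ∧ i' ≤ n ∧ OddPos (x i') v)) ∧
  (∀ v i i', 1 ≤ i → i < i' → i' ≤ n → v ∈ x i → v ∈ x i' →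
     (∀ l, i < l → l < i' → v ∉ x l) → (OddPos (x i) v ↔ ¬ OddPos (x i') v))

/-- `m` is active with respect to the tuple `t = (p 1, q 1, …, p (k-1), q (k-1), p k)`
if `m > p k` (the last entry) or `p j < m < q j` for some `j ≤ k - 1`. -/
def ActiveWrt (t : List ℕ) (m : ℕ) : Prop :=
  t.getD (t.length - 1) 0 < m ∨
  ∃ j, 2 * j + 1 < t.length ∧ t.getD (2 * j) 0 < m ∧ m < t.getD (2 * j + 1) 0

/-- The integers `(c, a, b)` form a 312-subpattern of the Gog word `x` at positions
`(i, j, k)`: `i < j < k`; `c, a, b` appear at odd-numbered positions of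
`x i, x j, x k` respectively; `b` is not at an even-numbered position of any of
`x (i+1), …, x (k-1)`; `b` is active with respect to `x j`; and `a < b < c`. -/
def Is312At (x : ℕ → List ℕ) (c a b : ℕ) (i j k : ℕ) : Prop :=
  i < j ∧ j < k ∧
  OddPos (x i) c ∧ OddPos (x j) a ∧ OddPos (x k) b ∧
  (∀ l, i < l → l < k → ¬ EvenPos (x l) b) ∧
  ActiveWrt (x j) b ∧ a < b ∧ b < c

/-! The new triple only moves `c` up and `a` down within their own tuples: tuples are strictly
increasing, so the last entry of `x i` (an odd-numbered position, the length being odd) is at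
least `c`, and the first entry of `x j` is at most `a`. All other conditions only involve `b`. -/

lemma List.Pairwise.getD_le_getD {α : Type*} [Preorder α] {l : List α}
    (hl : l.Pairwise (· < ·)) (d : α) {m m' : ℕ} (hmm' : m ≤ m') (hm' : m' < l.length) :
    l.getD m d ≤ l.getD m' d := by
  rw [List.getD_eq_getElem _ _ (hmm'.trans_lt hm'), List.getD_eq_getElem _ _ hm']
  exact (hl.imp le_of_lt).rel_get_of_le (a := ⟨m, hmm'.trans_lt hm'⟩) (b := ⟨m', hm'⟩) hmm'

namespace OddPos

variable {t : List ℕ} {v : ℕ}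

lemma getD_zero_le (ht : t.Pairwise (· < ·)) (hv : OddPos t v) : t.getD 0 0 ≤ v := by
  obtain ⟨m, hm, -, rfl⟩ := hv
  exact ht.getD_le_getD 0 m.zero_le hm

lemma le_getD_last (ht : t.Pairwise (· < ·)) (hv : OddPos t v) :
    v ≤ t.getD (t.length - 1) 0 := by
  obtain ⟨m, hm, -, rfl⟩ := hv
  exact ht.getD_le_getD 0 (by omega) (by omega)

lemma getD_zero (ht : 0 < t.length) : OddPos t (t.getD 0 0) :=
  ⟨0, ht, rfl, rfl⟩

lemma getD_last (ht : t.length % 2 = 1) : OddPos t (t.getD (t.length - 1) 0) :=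
  ⟨t.length - 1, by omega, by omega, rfl⟩

end OddPos

/-- If a Gog word `x` of size `n` contains a 312-subpattern `(c, a, b)` at positions
`(i, j, k)`, then the triple consisting of the last entry of `x i`, the first entry
of `x j`, and `b` is also a 312-subpattern of `x` at the same positions. -/
theorem subpattern312_extreme (n : ℕ) (x : ℕ → List ℕ) (hw : IsGogWord n x)
    (c a b i j k : ℕ) (hi : 1 ≤ i) (hk : k ≤ n)
    (h : Is312At x c a b i j k) :
    Is312At x ((x i).getD ((x i).length - 1) 0) ((x j).getD 0 0) b i j k := by
  obtain ⟨hij, hjk, hc, ha, hb, hb_even, hb_active, hab, hbc⟩ := h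
  have hsorted_i := hw.2.1 i hi (by omega)
  have hsorted_j := hw.2.1 j (by omega) (by omega)
  have hxj_pos : 0 < (x j).length := by obtain ⟨m, hm, -⟩ := ha; omega
  exact ⟨hij, hjk, .getD_last (hw.1 i hi (by omega)), .getD_zero hxj_pos, hb, hb_even,
    hb_active, (ha.getD_zero_le hsorted_j).trans_lt hab, hbc.trans_le (hc.le_getD_last hsorted_i)⟩
end

section
/- If a Gog word w = x_1 ... x_n contains a 312-subpattern, then there exist positions i and k with k > i+1 and a triple of integers (c, a, b) that forms a 312-subpattern of w occurring at the tuples x_i, x_{i+1}, x_k (i.e., occurring at consecutive first two positions). -/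
/-!
Let `(c, a, b)` be a 312-subpattern at `(i, j, k)` with `i + 1 < j`, and let `p` be the last
entry of `x (i + 1)`, which sits at an odd position. If `p < b`, then `b` is active with respect
to `x (i + 1)` and `(c, p, b)` is a 312-subpattern at `(i, i + 1, k)`. The case `p = b` is
impossible: by the alternation rule, between the odd occurrences of `b` in `x (i + 1)` and `x k`
there is an even occurrence, which a 312-subpattern forbids. If `p > b`, then `(p, a, b)` is a
312-subpattern at `(i + 1, j, k)`, and we conclude by induction on `j - i`.
-/

lemma OddPos.mem {t : List ℕ} {v : ℕ} (h : OddPos t v) : v ∈ t := by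
  obtain ⟨j, hj, -, rfl⟩ := h
  rw [List.getD_eq_getElem _ _ hj]
  exact List.getElem_mem hj

lemma evenPos_of_mem_of_not_oddPos {t : List ℕ} {v : ℕ} (hm : v ∈ t) (h : ¬ OddPos t v) :
    EvenPos t v := by
  obtain ⟨j, hj, rfl⟩ := List.mem_iff_getElem.1 hm
  have hget : t.getD j 0 = t[j] := List.getD_eq_getElem _ _ hj
  rcases Nat.mod_two_eq_zero_or_one j with h2 | h2
  · exact absurd ⟨j, hj, h2, hget⟩ h
  · exact ⟨j, hj, h2, hget⟩

lemma oddPos_getD_length_sub_one {t : List ℕ} (ht : t.length % 2 = 1) :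
    OddPos t (t.getD (t.length - 1) 0) :=
  ⟨t.length - 1, by omega, by omega, rfl⟩

namespace IsGogWord

variable {n : ℕ} {x : ℕ → List ℕ}

lemma exists_evenPos_between (hw : IsGogWord n x) {b l l' : ℕ} (hl : 1 ≤ l) (hll' : l < l')
    (hl' : l' ≤ n) (ho : OddPos (x l) b) (ho' : OddPos (x l') b) :
    ∃ m, l < m ∧ m < l' ∧ EvenPos (x m) b := by
  classical
  have hex : ∃ m, l < m ∧ b ∈ x m := ⟨l', hll', ho'.mem⟩
  obtain ⟨hlm, hbm⟩ := Nat.find_spec hex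
  have hml' : Nat.find hex ≤ l' := Nat.find_min' hex ⟨hll', ho'.mem⟩
  -- `x (Nat.find hex)` holds the next occurrence of `b` after `x l`
  have hnot : ¬ OddPos (x (Nat.find hex)) b :=
    (hw.2.2.2.2 b l _ hl hlm (by omega) ho.mem hbm
      fun r hlr hr hbr => Nat.find_min hex hr ⟨hlr, hbr⟩).1 ho
  refine ⟨Nat.find hex, hlm, lt_of_le_of_ne hml' ?_, evenPos_of_mem_of_not_oddPos hbm hnot⟩
  exact fun h => hnot (h ▸ ho')

lemma not_oddPos_of_is312At (hw : IsGogWord n x) {c a b i j k l : ℕ} (hi : 1 ≤ i)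
    (hk : k ≤ n) (hp : Is312At x c a b i j k) (hil : i < l) (hlk : l < k) :
    ¬ OddPos (x l) b := fun ho =>
  let ⟨m, hlm, hmk, he⟩ := hw.exists_evenPos_between (by omega) hlk hk ho hp.2.2.2.2.1
  hp.2.2.2.2.2.1 m (by omega) hmk he

theorem exists_is312At_succ_of_is312At (hw : IsGogWord n x) {c a b i j k : ℕ} (hi : 1 ≤ i)
    (hk : k ≤ n) (hp : Is312At x c a b i j k) :
    ∃ c a b i k, 1 ≤ i ∧ i + 1 < k ∧ k ≤ n ∧ Is312At x c a b i (i + 1) k := by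
  obtain ⟨hij, hjk, hoc, hoa, hob, hne, hact, hab, hbc⟩ := id hp
  rcases (Nat.succ_le_of_lt hij).eq_or_lt with rfl | hij'
  · exact ⟨c, a, b, i, k, hi, hjk, hk, hp⟩
  obtain ⟨p, hp_def⟩ : ∃ p, (x (i + 1)).getD ((x (i + 1)).length - 1) 0 = p := ⟨_, rfl⟩
  have hop : OddPos (x (i + 1)) p :=
    hp_def ▸ oddPos_getD_length_sub_one (hw.1 _ (by omega) (by omega))
  rcases lt_trichotomy p b with hpb | rfl | hbp
  · exact ⟨c, p, b, i, k, hi, by omega, hk, by omega, by omega, hoc, hop, hob, hne,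
      Or.inl (hp_def ▸ hpb), hpb, hbc⟩
  · exact absurd hop <| hw.not_oddPos_of_is312At hi hk hp (by omega) (by omega)
  · exact hw.exists_is312At_succ_of_is312At (by omega) hk
      ⟨hij', hjk, hop, hoa, hob, fun l hl => hne l (by omega), hact, hab, hbp⟩
termination_by j - i

end IsGogWord

/-- If a Gog word `x` of size `n` contains a 312-subpattern, then it contains a
312-subpattern whose first two positions are consecutive, i.e. occurring at tuples
`x i, x (i+1), x k` for some `k > i + 1`. -/
theorem subpattern312_consecutive (n : ℕ) (x : ℕ → List ℕ) (hw : IsGogWord n x)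
    (h : ∃ c a b i j k, 1 ≤ i ∧ k ≤ n ∧ Is312At x c a b i j k) :
    ∃ c a b i k, 1 ≤ i ∧ i + 1 < k ∧ k ≤ n ∧ Is312At x c a b i (i + 1) k := by
  obtain ⟨c, a, b, i, j, k, hi, hk, hp⟩ := h
  exact hw.exists_is312At_succ_of_is312At hi hk hp
end
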